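/- arXiv:2502.14154 — 3 statements merged into one kernel-verified Lean document; each statement's English description precedes it below -/
import Mathlib

section
/- Let u : A → ℝ be a Bernoulli utility on A = {a,b,c} and let π¹, π² ∈ Δ(A) be lotteries such that π² does not weakly stochastically dominate π¹ at the strict order P induced by u (i.e., π² ≠ π¹ and it is not the case that for every x ∈ A, Σ_{y : y P-above-or-equal x} π²(y) ≥ Σ_{y : y P-above-or-equal x} π¹(y)). Then there exists a Bernoulli utility u¹ : A → ℝ with no ties, inducing the same strict order P as u, such that the expected utility u¹(π¹) > u¹(π²). -/
open Finset Filter Topology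

/-- No ties on degenerate lotteries. -/
def NoTies (u : Fin 3 → ℝ) : Prop := ∀ x y : Fin 3, x ≠ y → u x ≠ u y

/-- A lottery over three objects. -/
def IsLottery (π : Fin 3 → ℝ) : Prop := (∀ x, 0 ≤ π x) ∧ ∑ x, π x = 1

/-- A 3×3 bistochastic matrix (rows = agents, columns = objects). -/
def Bistochastic (π : Fin 3 → Fin 3 → ℝ) : Prop :=
  (∀ i x, 0 ≤ π i x) ∧ (∀ i, ∑ x, π i x = 1) ∧ (∀ x, ∑ i, π i x = 1)

/-- Expected utility of lottery `π` under Bernoulli utility `u`. -/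
def EU (u π : Fin 3 → ℝ) : ℝ := ∑ x, u x * π x

/-- `u` and `v` induce the same strict order on objects. -/
def SameOrder (u v : Fin 3 → ℝ) : Prop := ∀ x y : Fin 3, u x > u y ↔ v x > v y

def NoTiesProfile (u : Fin 3 → Fin 3 → ℝ) : Prop := ∀ i, NoTies (u i)

/-- Utilities normalized to sum to one. -/
def Normalized (u : Fin 3 → ℝ) : Prop := ∑ x, u x = 1

/-- Rate of middle substitution, for `u a > u b > u c`. -/
noncomputable def mu (u : Fin 3 → ℝ) (a b c : Fin 3) : ℝ := (u b - u c) / (u a - u c)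

/-- Effectively the same: same strict order and same rate of middle substitution. -/
def EffSame (u v : Fin 3 → ℝ) : Prop :=
  SameOrder u v ∧ ∀ a b c : Fin 3, u a > u b → u b > u c → mu u a b c = mu v a b c

/-- The rule maps (no-ties) profiles to bistochastic matrices. -/
def BistochasticValued (φ : (Fin 3 → Fin 3 → ℝ) → Fin 3 → Fin 3 → ℝ) : Prop :=
  ∀ u, NoTiesProfile u → Bistochastic (φ u)

def StrategyProof (φ : (Fin 3 → Fin 3 → ℝ) → Fin 3 → Fin 3 → ℝ) : Prop :=
  ∀ u i ui', NoTiesProfile u → NoTies ui' →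
    EU (u i) (φ u i) ≥ EU (u i) (φ (Function.update u i ui') i)

def NonBossy (φ : (Fin 3 → Fin 3 → ℝ) → Fin 3 → Fin 3 → ℝ) : Prop :=
  ∀ u i ui', NoTiesProfile u → NoTies ui' →
    φ u i = φ (Function.update u i ui') i → φ u = φ (Function.update u i ui')

/-- `π'` Pareto-dominates `π` at `u` in expected utility. -/
def Dominates (u π' π : Fin 3 → Fin 3 → ℝ) : Prop :=
  (∀ j, EU (u j) (π' j) ≥ EU (u j) (π j)) ∧ ∃ i, EU (u i) (π' i) > EU (u i) (π i)

def Efficient (φ : (Fin 3 → Fin 3 → ℝ) → Fin 3 → Fin 3 → ℝ) : Prop :=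
  ∀ u, NoTiesProfile u → ¬ ∃ π', Bistochastic π' ∧ Dominates u π' (φ u)

/-- Normalized-cone-continuity. -/
def NCContinuous (φ : (Fin 3 → Fin 3 → ℝ) → Fin 3 → Fin 3 → ℝ) : Prop :=
  ∀ (u : Fin 3 → Fin 3 → ℝ) (i : Fin 3) (us : ℕ → Fin 3 → ℝ),
    NoTiesProfile u → Normalized (u i) →
    (∀ k, NoTies (us k) ∧ Normalized (us k)) →
    Tendsto us atTop (nhds (u i)) →
    Tendsto (fun k => φ (Function.update u i (us k))) atTop (nhds (φ u))

theorem stmt2 (u : Fin 3 → ℝ) (hu : NoTies u) (π1 π2 : Fin 3 → ℝ)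
    (h1 : IsLottery π1) (h2 : IsLottery π2) (hne : π2 ≠ π1)
    (hnd : ¬ ∀ x : Fin 3,
      ∑ y ∈ Finset.univ.filter (fun y => u y ≥ u x), π1 y ≤
      ∑ y ∈ Finset.univ.filter (fun y => u y ≥ u x), π2 y) :
    ∃ u1 : Fin 3 → ℝ, NoTies u1 ∧ SameOrder u1 u ∧ EU u1 π1 > EU u1 π2 := by
  push_neg at hnd
  obtain ⟨x0, hx0⟩ := hnd
  set d : Fin 3 → ℝ := fun y => π1 y - π2 y with hdd
  set F : Fin 3 → ℝ := fun x => ∑ y ∈ Finset.univ.filter (fun y => u y ≥ u x), d y with hFd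
  have hF0 : 0 < F x0 := by
    have hsplit : F x0 = (∑ y ∈ Finset.univ.filter (fun y => u y ≥ u x0), π1 y)
        - ∑ y ∈ Finset.univ.filter (fun y => u y ≥ u x0), π2 y := by
      simp [hFd, hdd, Finset.sum_sub_distrib]
    rw [hsplit]; linarith
  set T : ℝ := ∑ x, F x with hTdef
  set ε : ℝ := F x0 / (2 * (|T| + 1)) with hεdef
  have hden : (0:ℝ) < 2 * (|T| + 1) := by positivity
  have hεpos : 0 < ε := div_pos hF0 hden
  set N : Fin 3 → ℝ := fun y => ∑ x, if u x ≤ u y then (1:ℝ) else 0 with hNdef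
  set I : Fin 3 → ℝ := fun y => if u x0 ≤ u y then (1:ℝ) else 0 with hIdef
  set u1 : Fin 3 → ℝ := fun y => ε * N y + I y with hu1def
  -- monotonicity of u1 in the order of u
  have key : ∀ x y : Fin 3, u x > u y → u1 x > u1 y := by
    intro x y hxy
    have hNlt : N y < N x := by
      simp only [hNdef]
      apply Finset.sum_lt_sum
      · intro i _
        split_ifs with ha hb
        · exact le_refl _
        · exact absurd (le_of_lt (lt_of_le_of_lt ha hxy)) hb
        · norm_num
        · exact le_refl _
      · refine ⟨x, Finset.mem_univ x, ?_⟩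
        rw [if_neg (not_le.mpr hxy), if_pos (le_refl _)]
        norm_num
    have hIle : I y ≤ I x := by
      simp only [hIdef]
      split_ifs with ha hb
      · exact le_refl _
      · exact absurd (le_of_lt (lt_of_le_of_lt ha hxy)) hb
      · norm_num
      · exact le_refl _
    simp only [hu1def]
    nlinarith
  have horder : ∀ x y : Fin 3, u1 x > u1 y ↔ u x > u y := by
    intro x y
    constructor
    · intro h
      by_contra hc
      rcases lt_trichotomy (u x) (u y) with h' | h' | h'
      · exact absurd h (not_lt.mpr (le_of_lt (key y x h')))
      · have hxy : x = y := by
          by_contra hne'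
          exact hu x y hne' h'
        rw [hxy] at h; exact lt_irrefl _ h
      · exact hc h'
    · exact key x y
  refine ⟨u1, ?_, ?_, ?_⟩
  · intro x y hxy hne'
    rcases lt_trichotomy (u x) (u y) with h' | h' | h'
    · exact absurd hne' (ne_of_gt (key y x h')).symm
    · exact hu x y hxy h'
    · exact absurd hne' (ne_of_gt (key x y h'))
  · exact horder
  · -- expected utility computation
    have hEU : EU u1 π1 - EU u1 π2 = ε * T + F x0 := by
      have h1' : EU u1 π1 - EU u1 π2 = ∑ y, u1 y * d y := by
        simp [EU, hdd, Finset.sum_sub_distrib, mul_sub]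
      have hNsum : ∑ y, N y * d y = T := by
        rw [hTdef]
        have : ∀ y : Fin 3, N y * d y = ∑ x, if u x ≤ u y then d y else 0 := by
          intro y
          simp only [hNdef, Finset.sum_mul]
          congr 1; funext x
          split_ifs <;> simp
        simp only [this]
        rw [Finset.sum_comm]
        congr 1; funext x
        rw [hFd]
        simp [Finset.sum_filter, ge_iff_le]
      have hIsum : ∑ y, I y * d y = F x0 := by
        have : ∀ y : Fin 3, I y * d y = if u x0 ≤ u y then d y else 0 := by
          intro y
          simp only [hIdef]
          split_ifs <;> simp
        simp only [this]
        rw [hFd]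
        simp [Finset.sum_filter, ge_iff_le]
      calc EU u1 π1 - EU u1 π2 = ∑ y, (ε * N y + I y) * d y := h1'
        _ = ε * ∑ y, N y * d y + ∑ y, I y * d y := by
            rw [Finset.mul_sum, ← Finset.sum_add_distrib]
            congr 1; funext y; ring
        _ = ε * T + F x0 := by rw [hNsum, hIsum]
    have habs : -|T| ≤ T := neg_abs_le T
    have hmul : ε * (2 * (|T| + 1)) = F x0 := div_mul_cancel₀ _ (ne_of_gt hden)
    have h0T : 0 ≤ |T| := abs_nonneg T
    have : 0 < ε * T + F x0 := by nlinarith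
    linarith [hEU, this]
end

section
/- Suppose φ is a strategy-proof rule on three agents and three objects A = {a,b,c}. Let u be a utility profile with u_i(a) > u_i(b) > u_i(c) for agent i, and let u_i' be another no-ties utility with the same strict order and a strictly larger rate of middle substitution μ(u_i') > μ(u_i). If the lottery φ_i(u) is supported on {a,b} or supported on {b,c}, then φ_i(u_i', u_{-i}) = φ_i(u). -/
open Finset Filter Topology

lemma mem3 : ∀ (a b c x : Fin 3), a ≠ b → a ≠ c → b ≠ c → x = a ∨ x = b ∨ x = c := by decide

lemma sum3 (a b c : Fin 3) (hab : a ≠ b) (hac : a ≠ c) (hbc : b ≠ c) (f : Fin 3 → ℝ) :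
    ∑ x, f x = f a + f b + f c := by
  fin_cases a <;> fin_cases b <;> fin_cases c <;> simp_all [Fin.sum_univ_three] <;> ring

theorem stmt3 (φ : (Fin 3 → Fin 3 → ℝ) → Fin 3 → Fin 3 → ℝ)
    (hB : BistochasticValued φ) (hSP : StrategyProof φ)
    (u : Fin 3 → Fin 3 → ℝ) (hu : NoTiesProfile u) (i : Fin 3)
    (a b c : Fin 3) (hab : a ≠ b) (hac : a ≠ c) (hbc : b ≠ c)
    (h1 : u i a > u i b) (h2 : u i b > u i c)
    (ui' : Fin 3 → ℝ) (hui' : NoTies ui') (hsame : SameOrder ui' (u i))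
    (hmu : mu ui' a b c > mu (u i) a b c)
    (hsupp : φ u i a + φ u i b = 1 ∨ φ u i b + φ u i c = 1) :
    φ (Function.update u i ui') i = φ u i := by
  set u' := Function.update u i ui' with hu'def
  have hu' : NoTiesProfile u' := by
    intro j
    by_cases hj : j = i
    · subst hj; simpa [hu'def] using hui'
    · simpa [hu'def, Function.update_of_ne hj] using hu j
  have hui : u' i = ui' := by simp [hu'def]
  have hback : Function.update u' i (u i) = u := by
    rw [hu'def]; simp
  have SP1 := hSP u i ui' hu hui'
  have SP2 := hSP u' i (u i) hu' (hu i)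
  rw [hback, hui] at SP2
  -- expand expected utilities
  have E1 : EU (u i) (φ u i) = u i a * φ u i a + u i b * φ u i b + u i c * φ u i c :=
    sum3 a b c hab hac hbc _
  have E2 : EU (u i) (φ u' i) = u i a * φ u' i a + u i b * φ u' i b + u i c * φ u' i c :=
    sum3 a b c hab hac hbc _
  have E3 : EU ui' (φ u i) = ui' a * φ u i a + ui' b * φ u i b + ui' c * φ u i c :=
    sum3 a b c hab hac hbc _
  have E4 : EU ui' (φ u' i) = ui' a * φ u' i a + ui' b * φ u' i b + ui' c * φ u' i c :=
    sum3 a b c hab hac hbc _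
  rw [E1, E2] at SP1
  rw [E3, E4] at SP2
  obtain ⟨hnn, hrow, -⟩ := hB u hu
  obtain ⟨hnn', hrow', -⟩ := hB u' hu'
  have hsum : φ u i a + φ u i b + φ u i c = 1 := by
    rw [← sum3 a b c hab hac hbc]; exact hrow i
  have hsum' : φ u' i a + φ u' i b + φ u' i c = 1 := by
    rw [← sum3 a b c hab hac hbc]; exact hrow' i
  -- order facts
  have h1' : ui' a > ui' b := (hsame a b).mpr h1
  have h2' : ui' b > ui' c := (hsame b c).mpr h2
  have hA : (0:ℝ) < u i a - u i c := by linarith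
  have hA' : (0:ℝ) < ui' a - ui' c := by linarith
  have hmul : (u i b - u i c) * (ui' a - ui' c) < (ui' b - ui' c) * (u i a - u i c) := by
    unfold mu at hmu
    rw [gt_iff_lt, div_lt_div_iff₀ hA hA'] at hmu
    exact hmu
  -- cleaned strategy-proofness inequalities
  have S1 : (u i a - u i c) * (φ u i a - φ u' i a)
      + (u i b - u i c) * (φ u i b - φ u' i b) ≥ 0 := by
    have e : (u i a - u i c) * (φ u i a - φ u' i a)
        + (u i b - u i c) * (φ u i b - φ u' i b)
        = (u i a * φ u i a + u i b * φ u i b + u i c * φ u i c)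
          - (u i a * φ u' i a + u i b * φ u' i b + u i c * φ u' i c)
          + u i c * ((φ u' i a + φ u' i b + φ u' i c) - (φ u i a + φ u i b + φ u i c)) := by
      ring
    rw [e, hsum, hsum']
    linarith [SP1]
  have S2 : (ui' a - ui' c) * (φ u' i a - φ u i a)
      + (ui' b - ui' c) * (φ u' i b - φ u i b) ≥ 0 := by
    have e : (ui' a - ui' c) * (φ u' i a - φ u i a)
        + (ui' b - ui' c) * (φ u' i b - φ u i b)
        = (ui' a * φ u' i a + ui' b * φ u' i b + ui' c * φ u' i c)
          - (ui' a * φ u i a + ui' b * φ u i b + ui' c * φ u i c)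
          + ui' c * ((φ u i a + φ u i b + φ u i c) - (φ u' i a + φ u' i b + φ u' i c)) := by
      ring
    rw [e, hsum, hsum']
    linarith [SP2]
  -- key monotonicity: the middle probability weakly rises
  have hbge : φ u' i b ≥ φ u i b := by
    by_contra hcon
    push_neg at hcon
    have T1 : 0 ≤ (ui' a - ui' c) * ((u i a - u i c) * (φ u i a - φ u' i a)
        + (u i b - u i c) * (φ u i b - φ u' i b)) := mul_nonneg hA'.le S1
    have T2 : 0 ≤ (u i a - u i c) * ((ui' a - ui' c) * (φ u' i a - φ u i a)
        + (ui' b - ui' c) * (φ u' i b - φ u i b)) := mul_nonneg hA.le S2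
    have P : 0 < ((ui' b - ui' c) * (u i a - u i c) - (u i b - u i c) * (ui' a - ui' c))
        * (φ u i b - φ u' i b) := mul_pos (by linarith) (by linarith)
    nlinarith [T1, T2, P]
  have hBpos : (0:ℝ) < u i b - u i c := by linarith
  have hB'pos : (0:ℝ) < ui' b - ui' c := by linarith
  have hA'B' : ui' b - ui' c < ui' a - ui' c := by linarith
  -- equality at a, b, c in each support case
  have hmain : φ u' i a = φ u i a ∧ φ u' i b = φ u i b ∧ φ u' i c = φ u i c := by
    rcases hsupp with hcase | hcase
    · -- support in {a,b} : φ u i c = 0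
      have hpc : φ u i c = 0 := by linarith
      have key : (ui' a - ui' b) * (φ u i b - φ u' i b) ≥ (ui' a - ui' c) * φ u' i c := by
        have e : (ui' a - ui' b) * (φ u i b - φ u' i b) - (ui' a - ui' c) * φ u' i c
            = ((ui' a - ui' c) * (φ u' i a - φ u i a)
              + (ui' b - ui' c) * (φ u' i b - φ u i b))
              + (ui' a - ui' c) * ((φ u i a + φ u i b)
                - (φ u' i a + φ u' i b + φ u' i c)) := by ring
        rw [hcase, hsum'] at e
        have e' : (ui' a - ui' b) * (φ u i b - φ u' i b) - (ui' a - ui' c) * φ u' i c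
            = (ui' a - ui' c) * (φ u' i a - φ u i a)
              + (ui' b - ui' c) * (φ u' i b - φ u i b) := by
          rw [e]; ring
        linarith [S2, e']
      have hP1 : 0 ≤ (ui' a - ui' b) * (φ u' i b - φ u i b) :=
        mul_nonneg (by linarith) (by linarith)
      have hP2 : 0 ≤ (ui' a - ui' c) * φ u' i c := mul_nonneg hA'.le (hnn' i c)
      have hc0 : φ u' i c = 0 := by
        have hz : (ui' a - ui' c) * φ u' i c = 0 := by
          have : (ui' a - ui' b) * (φ u i b - φ u' i b)
              + (ui' a - ui' b) * (φ u' i b - φ u i b) = 0 := by ring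
          linarith [key, hP1, hP2]
        rcases mul_eq_zero.mp hz with h | h
        · exact absurd h (by linarith)
        · exact h
      have hbeq : φ u' i b = φ u i b := by
        have hble : φ u' i b ≤ φ u i b := by
          by_contra hcon
          push_neg at hcon
          have hpos : 0 < (ui' a - ui' b) * (φ u' i b - φ u i b) :=
            mul_pos (by linarith) (by linarith)
          have : (ui' a - ui' b) * (φ u i b - φ u' i b)
              + (ui' a - ui' b) * (φ u' i b - φ u i b) = 0 := by ring
          linarith [key, hP2, hpos]
        linarith
      refine ⟨by linarith, hbeq, by linarith⟩
    · -- support in {b,c} : φ u i a = 0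
      have hpa : φ u i a = 0 := by linarith
      rw [hpa] at S1
      have key : (u i a - u i c) * φ u' i a ≤ (u i b - u i c) * (φ u i b - φ u' i b) := by
        have e : (u i a - u i c) * (0 - φ u' i a)
            = -((u i a - u i c) * φ u' i a) := by ring
        linarith [S1, e]
      have hP1 : 0 ≤ (u i a - u i c) * φ u' i a := mul_nonneg hA.le (hnn' i a)
      have hP2 : (u i b - u i c) * (φ u i b - φ u' i b) ≤ 0 :=
        mul_nonpos_of_nonneg_of_nonpos hBpos.le (by linarith)
      have ha0 : φ u' i a = 0 := by
        have hz : (u i a - u i c) * φ u' i a = 0 := le_antisymm (by linarith) hP1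
        rcases mul_eq_zero.mp hz with h | h
        · exact absurd h (by linarith)
        · exact h
      have hbeq : φ u' i b = φ u i b := by
        have hz : (u i b - u i c) * (φ u i b - φ u' i b) = 0 := le_antisymm hP2 (by linarith)
        rcases mul_eq_zero.mp hz with h | h
        · exact absurd h (by linarith)
        · linarith
      refine ⟨by linarith, hbeq, by linarith⟩
  obtain ⟨Ha, Hb, Hc⟩ := hmain
  funext x
  rcases mem3 a b c x hab hac hbc with rfl | rfl | rfl
  · exact Ha
  · exact Hb
  · exact Hc
end

section
/- Suppose φ is an efficient, strategy-proof, non-bossy, and normalized-cone-continuous rule on three agents and three objects. Let u be a profile where agents i ≠ j have the same induced strict order with u_i(a) > u_i(b) > u_i(c), and let u_i' be any no-ties utility with the same strict order as u_i. If φ_{ib}(u) + φ_{jb}(u) > 0, then φ(u_i', u_{-i}) = φ(u), and moreover φ_i(u), φ_j(u) ∈ [a,b] ∪ [b,c]. -/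
open Finset Filter Topology

/-!
For an agent ranking `a > b > c`, expected utility is an increasing affine function of
`π a + θ * π b`, where `θ ∈ (0, 1)` is the rate of middle substitution. Strategy-proofness makes
two reports incentive compatible with each other, so a single common entry of the two lotteries
forces them to coincide, and non-bossiness then fixes the whole allocation. Efficiency forbids an
agent of higher rate to hold both `a` and `c` while one of lower rate holds `b`.

If `h` held a fully mixed lottery while `l` shares its ranking, continuity and these two facts make
every small change of `l`'s rate invisible, hence every change of it on all of `(0, 1)`. But `l`,
seen once below and once above `h`'s rate, then holds neither `b` nor one of `a`, `c`, which leaves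
`h` without `a` or `c`. So along the rates of `i` its lottery always has a vanishing entry, and
that entry determines the allocation: the allocation takes finitely many values on the connected
interval `(0, 1)`, hence only one. The corner property follows from one more trade after raising
`i`'s rate above `j`'s.
-/

open Function

theorem IsPreconnected.apply_eq_of_eventually_eq {α β : Type*} [TopologicalSpace α]
    [TopologicalSpace β] [T1Space β] {s : Set α} {f : α → β} {y : β} {x₀ : α}
    (hs : IsPreconnected s) (hso : IsOpen s) (hf : ContinuousOn f s) (hx₀ : x₀ ∈ s)
    (hfx₀ : f x₀ = y) (hloc : ∀ x ∈ s, f x = y → ∀ᶠ x' in 𝓝 x, f x' = y) :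
    ∀ x ∈ s, f x = y := by
  have hsub : s ⊆ {x ∈ s | f x = y} := by
    refine hs.subset_of_closure_inter_subset ?_ ⟨x₀, hx₀, hx₀, hfx₀⟩ ?_
    · exact isOpen_iff_mem_nhds.2 fun x hx =>
        (show ∀ᶠ x' in 𝓝 x, x' ∈ s from hso.mem_nhds hx.1).and (hloc x hx.1 hx.2)
    · rintro x ⟨hxcl, hx⟩
      have hfx := ((hf x hx).mono (Set.sep_subset _ _)).mem_closure_image hxcl
      exact ⟨hx, closure_minimal (Set.image_subset_iff.2 fun x hx => hx.2) isClosed_singleton hfx⟩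
  exact fun x hx => (hsub hx).2

theorem Filter.Tendsto.eventually_pos_of_pos {ι m n : Type*} [Finite m] [Finite n]
    {l : Filter ι} {F : ι → m → n → ℝ} {M : m → n → ℝ} (hF : Tendsto F l (𝓝 M)) :
    ∀ᶠ i in l, ∀ g x, 0 < M g x → 0 < F i g x := by
  refine eventually_all.2 fun g => eventually_all.2 fun x => ?_
  by_cases hM : 0 < M g x
  · have hFgx := tendsto_pi_nhds.1 (tendsto_pi_nhds.1 hF g) x
    exact (hFgx.eventually (lt_mem_nhds hM)).mono fun _ h _ => h
  · exact .of_forall fun _ h => absurd h hM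

section Objects

variable {a b c : Fin 3}

theorem fin_three_eq_or_eq_or_eq (hab : a ≠ b) (hac : a ≠ c) (hbc : b ≠ c) (x : Fin 3) :
    x = a ∨ x = b ∨ x = c := by
  revert a b c x
  decide

theorem sum_fin_three_of_ne {M : Type*} [AddCommMonoid M] (hab : a ≠ b) (hac : a ≠ c)
    (hbc : b ≠ c) (f : Fin 3 → M) : ∑ x, f x = f a + f b + f c := by
  have huniv : (univ : Finset (Fin 3)) = {a, b, c} := by
    refine (eq_univ_of_forall fun x => ?_).symm
    rcases fin_three_eq_or_eq_or_eq hab hac hbc x with rfl | rfl | rfl <;> simp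
  rw [huniv, sum_insert (by simp [hab, hac]), sum_pair hbc, add_assoc]

end Objects

/-- `u` ranks `a > b > c`, and `θ` is its rate of middle substitution `mu u a b c`. -/
def HasRate (a b c : Fin 3) (u : Fin 3 → ℝ) (θ : ℝ) : Prop :=
  u b < u a ∧ u c < u b ∧ u b - u c = θ * (u a - u c)

namespace HasRate

variable {a b c : Fin 3} {u : Fin 3 → ℝ} {θ : ℝ}

theorem mem_Ioo (hu : HasRate a b c u θ) : θ ∈ Set.Ioo 0 1 := by
  obtain ⟨h1, h2, h3⟩ := hu
  constructor <;> nlinarith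

theorem noTies (hab : a ≠ b) (hac : a ≠ c) (hbc : b ≠ c) (hu : HasRate a b c u θ) :
    NoTies u := by
  obtain ⟨h1, h2, -⟩ := hu
  intro x y hxy
  rcases fin_three_eq_or_eq_or_eq hab hac hbc x with rfl | rfl | rfl <;>
    rcases fin_three_eq_or_eq_or_eq hab hac hbc y with rfl | rfl | rfl <;>
    first
      | exact absurd rfl hxy
      | exact ne_of_gt (by linarith)
      | exact ne_of_lt (by linarith)

theorem eu_eq (hab : a ≠ b) (hac : a ≠ c) (hbc : b ≠ c) (hu : HasRate a b c u θ)
    {π : Fin 3 → ℝ} (hπ : ∑ x, π x = 1) :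
    EU u π = (u a - u c) * (π a + θ * π b) + u c := by
  rw [sum_fin_three_of_ne hab hac hbc] at hπ
  rw [EU, sum_fin_three_of_ne hab hac hbc]
  linear_combination π b * hu.2.2 + u c * hπ

end HasRate

theorem hasRate_mu {a b c : Fin 3} {u : Fin 3 → ℝ} (h1 : u b < u a) (h2 : u c < u b) :
    HasRate a b c u (mu u a b c) := by
  refine ⟨h1, h2, ?_⟩
  rw [mu, div_mul_cancel₀ _ (by linarith)]

/-- The utility of rate `t` normalized by `u a - u c = 1` and `∑ x, u x = 1`. -/
noncomputable def stdUtility (a b : Fin 3) (t : ℝ) : Fin 3 → ℝ :=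
  fun x => if x = a then 1 - t / 3 else if x = b then 2 * t / 3 else -(t / 3)

section StdUtility

variable {a b c : Fin 3}

theorem stdUtility_hasRate (hab : a ≠ b) (hac : a ≠ c) (hbc : b ≠ c) {t : ℝ}
    (ht : t ∈ Set.Ioo 0 1) : HasRate a b c (stdUtility a b t) t := by
  simp only [HasRate, stdUtility, if_pos, if_neg hab.symm, if_neg hac.symm, if_neg hbc.symm]
  exact ⟨by linarith [ht.2], by linarith [ht.1], by ring⟩

theorem stdUtility_normalized (hab : a ≠ b) (hac : a ≠ c) (hbc : b ≠ c) (t : ℝ) :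
    Normalized (stdUtility a b t) := by
  rw [Normalized, sum_fin_three_of_ne hab hac hbc]
  simp only [stdUtility, if_pos, if_neg hab.symm, if_neg hac.symm, if_neg hbc.symm]
  ring

theorem continuous_stdUtility : Continuous (stdUtility a b) :=
  continuous_pi fun x => by unfold stdUtility; split_ifs <;> fun_prop

end StdUtility

theorem NoTiesProfile.update {P : Fin 3 → Fin 3 → ℝ} (hP : NoTiesProfile P) (h : Fin 3)
    {z : Fin 3 → ℝ} (hz : NoTies z) : NoTiesProfile (Function.update P h z) := by
  intro g
  rcases eq_or_ne g h with rfl | hg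
  · rwa [update_self]
  · rw [update_of_ne hg]
    exact hP g

theorem Bistochastic.apply_eq_zero_of_eq_one {π : Fin 3 → Fin 3 → ℝ} (hπ : Bistochastic π)
    {h l x : Fin 3} (hhl : h ≠ l) (hl : π l x = 1) : π h x = 0 := by
  have := add_le_sum (f := fun g => π g x) (fun g _ => hπ.1 g x) (mem_univ h) (mem_univ l) hhl
  linarith [hπ.2.2 x, hπ.1 h x]

section IncentiveCompatibility

variable {a b c : Fin 3} {p q : Fin 3 → ℝ} {θ θ' : ℝ}

theorem le_of_incentiveCompatible (hθ : θ < θ') (h : q a + θ * q b ≤ p a + θ * p b)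
    (h' : p a + θ' * p b ≤ q a + θ' * q b) : p b ≤ q b := by
  nlinarith

theorem eq_of_incentiveCompatible (hab : a ≠ b) (hac : a ≠ c) (hbc : b ≠ c)
    (hp : ∑ x, p x = 1) (hq : ∑ x, q x = 1) (hθ : θ ∈ Set.Ioo 0 1) (hθ' : θ' ∈ Set.Ioo 0 1)
    (h : q a + θ * q b ≤ p a + θ * p b) (h' : p a + θ' * p b ≤ q a + θ' * q b)
    {x : Fin 3} (hx : p x = q x) : p = q := by
  rw [sum_fin_three_of_ne hab hac hbc] at hp hq
  obtain ⟨hθ0, hθ1⟩ := hθ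
  obtain ⟨hθ0', hθ1'⟩ := hθ'
  have hb : p b = q b := by
    rcases fin_three_eq_or_eq_or_eq hab hac hbc x with rfl | rfl | rfl
    · apply le_antisymm <;> nlinarith
    · exact hx
    · apply le_antisymm <;> nlinarith
  have ha : p a = q a := by rw [hb] at h h'; linarith
  funext y
  rcases fin_three_eq_or_eq_or_eq hab hac hbc y with rfl | rfl | rfl
  · exact ha
  · exact hb
  · linarith

end IncentiveCompatibility

section StrategyProof

variable {φ : (Fin 3 → Fin 3 → ℝ) → Fin 3 → Fin 3 → ℝ} {P : Fin 3 → Fin 3 → ℝ} {h : Fin 3}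
  {a b c : Fin 3} {θ θ' : ℝ}

theorem StrategyProof.score_le (hB : BistochasticValued φ) (hSP : StrategyProof φ)
    (hab : a ≠ b) (hac : a ≠ c) (hbc : b ≠ c) (hP : NoTiesProfile P)
    (hh : HasRate a b c (P h) θ) {z : Fin 3 → ℝ} (hz : NoTies z) :
    φ (update P h z) h a + θ * φ (update P h z) h b ≤ φ P h a + θ * φ P h b := by
  have hsp := hSP P h z hP hz
  rw [ge_iff_le, hh.eu_eq hab hac hbc ((hB P hP).2.1 h),
    hh.eu_eq hab hac hbc ((hB _ (hP.update h hz)).2.1 h), add_le_add_iff_right] at hsp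
  exact le_of_mul_le_mul_left hsp (by linarith [hh.1, hh.2.1])

theorem StrategyProof.incentiveCompatible (hB : BistochasticValued φ) (hSP : StrategyProof φ)
    (hab : a ≠ b) (hac : a ≠ c) (hbc : b ≠ c) (hP : NoTiesProfile P)
    (hh : HasRate a b c (P h) θ) {z : Fin 3 → ℝ} (hz : HasRate a b c z θ') :
    (φ (update P h z) h a + θ * φ (update P h z) h b ≤ φ P h a + θ * φ P h b) ∧
      φ P h a + θ' * φ P h b ≤ φ (update P h z) h a + θ' * φ (update P h z) h b := by
  refine ⟨hSP.score_le hB hab hac hbc hP hh (hz.noTies hab hac hbc), ?_⟩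
  have hP' := hP.update h (hz.noTies hab hac hbc)
  have hback := hSP.score_le hB hab hac hbc hP' (by rwa [update_self]) (hP h)
  rwa [update_idem, update_eq_self] at hback

theorem map_update_eq_of_apply_eq (hB : BistochasticValued φ) (hSP : StrategyProof φ)
    (hNB : NonBossy φ) (hab : a ≠ b) (hac : a ≠ c) (hbc : b ≠ c) (hP : NoTiesProfile P)
    (hh : HasRate a b c (P h) θ) {z : Fin 3 → ℝ} (hz : HasRate a b c z θ') {x : Fin 3}
    (hx : φ P h x = φ (update P h z) h x) : φ (update P h z) = φ P := by
  obtain ⟨hic, hic'⟩ := hSP.incentiveCompatible hB hab hac hbc hP hh hz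
  have hlot := eq_of_incentiveCompatible hab hac hbc ((hB P hP).2.1 h)
    ((hB _ (hP.update h (hz.noTies hab hac hbc))).2.1 h) hh.mem_Ioo hz.mem_Ioo hic hic' hx
  exact (hNB P h z hP (hz.noTies hab hac hbc) hlot).symm

theorem continuousOn_update_stdUtility (hC : NCContinuous φ) (hab : a ≠ b) (hac : a ≠ c)
    (hbc : b ≠ c) (hP : NoTiesProfile P) (h : Fin 3) :
    ContinuousOn (fun t => φ (update P h (stdUtility a b t))) (Set.Ioo 0 1) := by
  rw [continuousOn_iff_continuous_domRestrict, continuous_iff_seqContinuous]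
  intro t t₀ ht
  have hstd (s : Set.Ioo (0 : ℝ) 1) := (stdUtility_hasRate hab hac hbc s.2).noTies hab hac hbc
  have hlim := hC (update P h (stdUtility a b t₀)) h (fun n => stdUtility a b (t n))
    (hP.update h (hstd t₀)) (by rw [update_self]; exact stdUtility_normalized hab hac hbc _)
    (fun n => ⟨hstd (t n), stdUtility_normalized hab hac hbc _⟩)
    (by
      rw [update_self]
      exact (continuous_stdUtility.comp continuous_subtype_val).seqContinuous ht)
  simp only [update_idem] at hlim
  exact hlim

theorem map_update_stdUtility_eq (hB : BistochasticValued φ) (hSP : StrategyProof φ)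
    (hNB : NonBossy φ) (hC : NCContinuous φ) (hab : a ≠ b) (hac : a ≠ c) (hbc : b ≠ c)
    (hP : NoTiesProfile P) (hh : HasRate a b c (P h) θ) :
    φ (update P h (stdUtility a b θ)) = φ P := by
  have hθ := hh.mem_Ioo
  have hic {t : ℝ} (ht : t ∈ Set.Ioo 0 1) :=
    hSP.incentiveCompatible hB hab hac hbc hP hh (stdUtility_hasRate hab hac hbc ht)
  have hcont : Tendsto (fun t => φ (update P h (stdUtility a b t)) h b) (𝓝 θ)
      (𝓝 (φ (update P h (stdUtility a b θ)) h b)) :=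
    continuousAt_pi.1 (continuousAt_pi.1 ((continuousOn_update_stdUtility hC hab hac hbc hP h
      ).continuousAt (isOpen_Ioo.mem_nhds hθ)) h) b
  -- monotonicity in the reported rate squeezes the `b`-entry from both sides of `θ`
  refine map_update_eq_of_apply_eq hB hSP hNB hab hac hbc hP hh
    (stdUtility_hasRate hab hac hbc hθ) (x := b) (le_antisymm ?_ ?_)
  · refine ge_of_tendsto (hcont.mono_left (nhdsWithin_le_nhds (s := Set.Ioi θ))) ?_
    filter_upwards [Ioo_mem_nhdsGT hθ.2] with t ht
    have ht' : t ∈ Set.Ioo 0 1 := ⟨hθ.1.trans ht.1, ht.2⟩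
    exact le_of_incentiveCompatible ht.1 (hic ht').1 (hic ht').2
  · refine le_of_tendsto (hcont.mono_left (nhdsWithin_le_nhds (s := Set.Iio θ))) ?_
    filter_upwards [Ioo_mem_nhdsLT hθ.1] with t ht
    have ht' : t ∈ Set.Ioo 0 1 := ⟨ht.1, ht.2.trans hθ.2⟩
    exact le_of_incentiveCompatible ht.2 (hic ht').2 (hic ht').1

end StrategyProof

section Efficiency

variable {a b c h l : Fin 3} {π : Fin 3 → Fin 3 → ℝ} {D : Fin 3 → ℝ}

theorem Bistochastic.transfer (hπ : Bistochastic π) (hhl : h ≠ l) (hD : ∑ x, D x = 0)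
    (hDh : ∀ x, 0 ≤ π h x + D x) (hDl : ∀ x, 0 ≤ π l x - D x) :
    Bistochastic fun g => π g + (if g = h then D else 0) - (if g = l then D else 0) := by
  refine ⟨fun g x => ?_, fun g => ?_, fun x => ?_⟩
  · by_cases hg : g = h
    · subst hg; simpa [hhl] using hDh x
    by_cases hg' : g = l
    · subst hg'; simpa [hg] using hDl x
    simpa [hg, hg'] using hπ.1 g x
  · by_cases hg : g = h
    · subst hg; simp [hhl, sum_add_distrib, hπ.2.1, hD]
    by_cases hg' : g = l
    · subst hg'; simp [hg, sum_sub_distrib, hπ.2.1, hD]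
    simpa [hg, hg'] using hπ.2.1 g
  · simp only [Pi.add_apply, Pi.sub_apply, apply_ite (fun v : Fin 3 → ℝ => v x), Pi.zero_apply,
      sum_sub_distrib, sum_add_distrib, sum_ite_eq', mem_univ, if_true, hπ.2.2 x]
    ring

theorem dominates_transfer {u : Fin 3 → Fin 3 → ℝ} (hhl : h ≠ l) (hDh : 0 < EU (u h) D)
    (hDl : EU (u l) D < 0) :
    Dominates u (fun g => π g + (if g = h then D else 0) - (if g = l then D else 0)) π := by
  have hEU (g : Fin 3) : EU (u g) (π g + (if g = h then D else 0) - (if g = l then D else 0)) =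
      EU (u g) (π g) + (if g = h then EU (u g) D else 0) - (if g = l then EU (u g) D else 0) := by
    simp only [EU]
    split_ifs <;> simp [mul_add, mul_sub, sum_add_distrib, sum_sub_distrib]
  refine ⟨fun g => ?_, h, ?_⟩ <;> rw [hEU]
  · by_cases hg : g = h
    · subst hg; rw [if_pos rfl, if_neg hhl]; linarith
    by_cases hg' : g = l
    · subst hg'; rw [if_neg hg, if_pos rfl]; linarith
    rw [if_neg hg, if_neg hg']; linarith
  · rw [if_pos rfl, if_neg hhl]; linarith

theorem exists_bistochastic_dominates (hab : a ≠ b) (hac : a ≠ c) (hbc : b ≠ c)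
    {u : Fin 3 → Fin 3 → ℝ} (hπ : Bistochastic π) (hhl : h ≠ l) {θ θ' : ℝ}
    (hh : HasRate a b c (u h) θ) (hl : HasRate a b c (u l) θ') (hθ : θ' < θ)
    (ha : 0 < π h a) (hc : 0 < π h c) (hb : 0 < π l b) :
    ∃ π', Bistochastic π' ∧ Dominates u π' π := by
  obtain ⟨α, hlα, hαh⟩ := exists_between hθ
  have hα0 : 0 < α := hl.mem_Ioo.1.trans hlα
  have hα1 : α < 1 := hαh.trans hh.mem_Ioo.2
  set ε := min (π h a) (min (π h c) (π l b))
  have hε : 0 < ε := lt_min ha (lt_min hc hb)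
  have hεa : ε ≤ π h a := min_le_left _ _
  have hεc : ε ≤ π h c := (min_le_right _ _).trans (min_le_left _ _)
  have hεb : ε ≤ π l b := (min_le_right _ _).trans (min_le_right _ _)
  -- `l` hands `ε` of `b` to `h` in exchange for an `α : 1 - α` mixture of `a` and `c`
  set D : Fin 3 → ℝ := fun x => if x = a then -(α * ε) else if x = b then ε else -((1 - α) * ε)
  have hDa : D a = -(α * ε) := if_pos rfl
  have hDb : D b = ε := by simp [D, hab.symm]
  have hDc : D c = -((1 - α) * ε) := by simp [D, hac.symm, hbc.symm]
  have hgain {v : Fin 3 → ℝ} {ϑ : ℝ} (hv : HasRate a b c v ϑ) :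
      EU v D = ε * ((ϑ - α) * (v a - v c)) := by
    rw [EU, sum_fin_three_of_ne hab hac hbc, hDa, hDb, hDc]
    linear_combination ε * hv.2.2
  refine ⟨_, hπ.transfer hhl (D := D) ?_ (fun x => ?_) (fun x => ?_), dominates_transfer hhl ?_ ?_⟩
  · rw [sum_fin_three_of_ne hab hac hbc, hDa, hDb, hDc]; ring
  · rcases fin_three_eq_or_eq_or_eq hab hac hbc x with rfl | rfl | rfl
    · rw [hDa]; nlinarith
    · rw [hDb]; linarith [hπ.1 h x]
    · rw [hDc]; nlinarith
  · rcases fin_three_eq_or_eq_or_eq hab hac hbc x with rfl | rfl | rfl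
    · rw [hDa]; nlinarith [hπ.1 l x]
    · rw [hDb]; linarith
    · rw [hDc]; nlinarith [hπ.1 l x]
  · rw [hgain hh]; exact mul_pos hε (mul_pos (by linarith) (by linarith [hh.1, hh.2.1]))
  · rw [hgain hl]
    exact mul_neg_of_pos_of_neg hε
      (mul_neg_of_neg_of_pos (by linarith) (by linarith [hl.1, hl.2.1]))

variable {φ : (Fin 3 → Fin 3 → ℝ) → Fin 3 → Fin 3 → ℝ} {P : Fin 3 → Fin 3 → ℝ}

theorem Efficient.not_trade (hB : BistochasticValued φ) (hE : Efficient φ) (hab : a ≠ b)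
    (hac : a ≠ c) (hbc : b ≠ c) (hP : NoTiesProfile P) (hhl : h ≠ l) {θ θ' : ℝ}
    (hh : HasRate a b c (P h) θ) (hl : HasRate a b c (P l) θ') (hθ : θ' < θ) :
    ¬(0 < φ P h a ∧ 0 < φ P h c ∧ 0 < φ P l b) := fun ⟨ha, hc, hb⟩ =>
  hE P hP (exists_bistochastic_dominates hab hac hbc (hB P hP) hhl hh hl hθ ha hc hb)

theorem Efficient.exists_apply_eq_zero_of_pos (hB : BistochasticValued φ) (hE : Efficient φ)
    (hab : a ≠ b) (hac : a ≠ c) (hbc : b ≠ c) (hP : NoTiesProfile P) (hhl : h ≠ l) {θ θ' : ℝ}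
    (hh : HasRate a b c (P h) θ) (hl : HasRate a b c (P l) θ') (hθ : θ' ≠ θ)
    (hX : ∀ x, 0 < φ P h x) : ∃ x, φ P l x = 0 := by
  by_contra! hY
  have hYpos (x : Fin 3) : 0 < φ P l x := ((hB P hP).1 l x).lt_of_ne' (hY x)
  rcases hθ.lt_or_gt with hlt | hlt
  · exact hE.not_trade hB hab hac hbc hP hhl hh hl hlt ⟨hX a, hX c, hYpos b⟩
  · exact hE.not_trade hB hab hac hbc hP hhl.symm hl hh hlt ⟨hYpos a, hYpos c, hX b⟩

end Efficiency

section Rigidity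

variable {φ : (Fin 3 → Fin 3 → ℝ) → Fin 3 → Fin 3 → ℝ} {P : Fin 3 → Fin 3 → ℝ}
  {a b c h l : Fin 3} {s m : ℝ}

theorem map_update_eq_of_pos (hB : BistochasticValued φ) (hE : Efficient φ)
    (hSP : StrategyProof φ) (hNB : NonBossy φ) (hab : a ≠ b) (hac : a ≠ c) (hbc : b ≠ c)
    (hP : NoTiesProfile P) (hhl : h ≠ l) (hh : HasRate a b c (P h) s)
    (hl : HasRate a b c (P l) m) {z : Fin 3 → ℝ} {t : ℝ} (hz : HasRate a b c z t) (hts : t ≠ s)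
    (hX : ∀ x, 0 < φ P h x) (hpos : ∀ g x, 0 < φ P g x → 0 < φ (update P l z) g x) :
    φ (update P l z) = φ P := by
  have hQ := hP.update l (hz.noTies hab hac hbc)
  obtain ⟨x, hx⟩ := hE.exists_apply_eq_zero_of_pos hB hab hac hbc hQ hhl
    (by rwa [update_of_ne hhl]) (by rwa [update_self]) hts fun x => hpos h x (hX x)
  have hPx : φ P l x = 0 :=
    (not_lt.1 fun hpx => (hpos l x hpx).ne' hx).antisymm ((hB P hP).1 l x)
  exact map_update_eq_of_apply_eq hB hSP hNB hab hac hbc hP hl hz (hPx.trans hx.symm)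

theorem Efficient.exists_apply_eq_zero_of_forall_eq (hB : BistochasticValued φ)
    (hE : Efficient φ) (hab : a ≠ b) (hac : a ≠ c) (hbc : b ≠ c) (hP : NoTiesProfile P)
    (hhl : h ≠ l) (hh : HasRate a b c (P h) s)
    (hconst : ∀ t ∈ Set.Ioo 0 1, φ (update P l (stdUtility a b t)) = φ P) :
    ∃ x, φ P h x = 0 := by
  by_contra! hX0
  have hX (x : Fin 3) : 0 < φ P h x := ((hB P hP).1 h x).lt_of_ne' (hX0 x)
  have hnot {t : ℝ} (ht : t ∈ Set.Ioo 0 1) {g k : Fin 3} (hgk : g ≠ k) {θ θ' : ℝ}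
      (hg : HasRate a b c (update P l (stdUtility a b t) g) θ)
      (hk : HasRate a b c (update P l (stdUtility a b t) k) θ') (hθ : θ' < θ) :
      ¬(0 < φ P g a ∧ 0 < φ P g c ∧ 0 < φ P k b) := by
    rw [← hconst t ht]
    exact hE.not_trade hB hab hac hbc (hP.update l
      ((stdUtility_hasRate hab hac hbc ht).noTies hab hac hbc)) hgk hg hk hθ
  obtain ⟨hs0, hs1⟩ := hh.mem_Ioo
  have hlow : s / 2 ∈ Set.Ioo 0 1 := ⟨by linarith, by linarith⟩
  have hhigh : (s + 1) / 2 ∈ Set.Ioo 0 1 := ⟨by linarith, by linarith⟩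
  have hYb : φ P l b = 0 := by
    have := hnot hlow hhl (by rwa [update_of_ne hhl])
      (by rw [update_self]; exact stdUtility_hasRate hab hac hbc hlow) (by linarith)
    exact (not_lt.1 fun hb => this ⟨hX a, hX c, hb⟩).antisymm ((hB P hP).1 l b)
  have hYac : φ P l a = 0 ∨ φ P l c = 0 := by
    have := hnot hhigh hhl.symm (by rw [update_self]; exact stdUtility_hasRate hab hac hbc hhigh)
      (by rwa [update_of_ne hhl]) (by linarith)
    by_contra! hac0
    exact this ⟨((hB P hP).1 l a).lt_of_ne' hac0.1, ((hB P hP).1 l c).lt_of_ne' hac0.2, hX b⟩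
  have hrow := (hB P hP).2.1 l
  rw [sum_fin_three_of_ne hab hac hbc] at hrow
  rcases hYac with hYa | hYc
  · exact (hX c).ne' ((hB P hP).apply_eq_zero_of_eq_one hhl (by linarith))
  · exact (hX a).ne' ((hB P hP).apply_eq_zero_of_eq_one hhl (by linarith))

theorem exists_apply_eq_zero_of_hasRate (hB : BistochasticValued φ) (hE : Efficient φ)
    (hSP : StrategyProof φ) (hNB : NonBossy φ) (hC : NCContinuous φ) (hab : a ≠ b)
    (hac : a ≠ c) (hbc : b ≠ c) (hP : NoTiesProfile P) (hhl : h ≠ l)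
    (hh : HasRate a b c (P h) s) (hl : HasRate a b c (P l) m) : ∃ x, φ P h x = 0 := by
  by_contra! hX0
  have hX (x : Fin 3) : 0 < φ P h x := ((hB P hP).1 h x).lt_of_ne' (hX0 x)
  have hG := continuousOn_update_stdUtility hC hab hac hbc hP l
  -- locally, and hence globally, the allocation does not react to `l`'s rate
  have hconst : ∀ t ∈ Set.Ioo 0 1, φ (update P l (stdUtility a b t)) = φ P := by
    refine isPreconnected_Ioo.apply_eq_of_eventually_eq isOpen_Ioo hG hl.mem_Ioo
      (map_update_stdUtility_eq hB hSP hNB hC hab hac hbc hP hl) fun t ht hGt => ?_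
    have hnear : ∀ᶠ t' in 𝓝 t, t' = t ∨ t' ≠ s := by
      rcases eq_or_ne t s with rfl | hts
      · exact .of_forall fun t' => em _
      · exact (eventually_ne_nhds hts).mono fun _ => Or.inr
    have hpos := (hG.continuousAt (isOpen_Ioo.mem_nhds ht)).tendsto.eventually_pos_of_pos
    rw [hGt] at hpos
    filter_upwards [isOpen_Ioo.mem_nhds ht, hnear, hpos] with t' ht' hne hpos'
    rcases hne with rfl | hts'
    · exact hGt
    · exact map_update_eq_of_pos hB hE hSP hNB hab hac hbc hP hhl hh hl
        (stdUtility_hasRate hab hac hbc ht') hts' hX hpos'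
  obtain ⟨x, hx⟩ := hE.exists_apply_eq_zero_of_forall_eq hB hab hac hbc hP hhl hh hconst
  exact hX0 x hx

theorem map_update_eq_of_hasRate (hB : BistochasticValued φ) (hE : Efficient φ)
    (hSP : StrategyProof φ) (hNB : NonBossy φ) (hC : NCContinuous φ) (hab : a ≠ b)
    (hac : a ≠ c) (hbc : b ≠ c) (hP : NoTiesProfile P) (hhl : h ≠ l)
    (hh : HasRate a b c (P h) s) (hl : HasRate a b c (P l) m) {z : Fin 3 → ℝ} {t : ℝ}
    (hz : HasRate a b c z t) : φ (update P h z) = φ P := by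
  set G := fun t => φ (update P h (stdUtility a b t))
  have hstd {t : ℝ} (ht : t ∈ Set.Ioo 0 1) := stdUtility_hasRate hab hac hbc ht
  have hQ {t : ℝ} (ht : t ∈ Set.Ioo 0 1) := hP.update h ((hstd ht).noTies hab hac hbc)
  have hzero (t : ℝ) (ht : t ∈ Set.Ioo 0 1) : ∃ x, G t h x = 0 :=
    exists_apply_eq_zero_of_hasRate hB hE hSP hNB hC hab hac hbc (hQ ht) hhl
      (by rw [update_self]; exact hstd ht) (by rwa [update_of_ne hhl.symm])
  -- a vanishing entry of `h`'s lottery determines the allocation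
  have hsub (x : Fin 3) : (G '' {t ∈ Set.Ioo 0 1 | G t h x = 0}).Subsingleton := by
    rintro _ ⟨t₁, ⟨ht₁, hx₁⟩, rfl⟩ _ ⟨t₂, ⟨ht₂, hx₂⟩, rfl⟩
    have := map_update_eq_of_apply_eq hB hSP hNB hab hac hbc (hQ ht₂)
      (by rw [update_self]; exact hstd ht₂) (hstd ht₁) (x := x)
      (by rw [update_idem]; exact hx₂.trans hx₁.symm)
    rwa [update_idem] at this
  have hconst (t : ℝ) (ht : t ∈ Set.Ioo 0 1) : G t = G s :=
    isPreconnected_Ioo.constant_of_mapsTo (Set.finite_iUnion fun x => (hsub x).finite).isDiscrete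
      (continuousOn_update_stdUtility hC hab hac hbc hP h)
      (fun t ht => Set.mem_iUnion.2 ((hzero t ht).imp fun _ hx => ⟨t, ⟨ht, hx⟩, rfl⟩))
      ht hh.mem_Ioo
  calc φ (update P h z) = G t := by
        rw [← map_update_stdUtility_eq hB hSP hNB hC hab hac hbc
          (hP.update h (hz.noTies hab hac hbc)) (by rwa [update_self]), update_idem]
    _ = G s := hconst t hz.mem_Ioo
    _ = φ P := map_update_stdUtility_eq hB hSP hNB hC hab hac hbc hP hh

theorem apply_add_apply_eq_one_or (hB : BistochasticValued φ) (hE : Efficient φ)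
    (hSP : StrategyProof φ) (hNB : NonBossy φ) (hC : NCContinuous φ) (hab : a ≠ b)
    (hac : a ≠ c) (hbc : b ≠ c) (hP : NoTiesProfile P) (hhl : h ≠ l)
    (hh : HasRate a b c (P h) s) (hl : HasRate a b c (P l) m) (hb : φ P h b + φ P l b > 0) :
    φ P h a + φ P h b = 1 ∨ φ P h b + φ P h c = 1 := by
  have hrow := (hB P hP).2.1 h
  rw [sum_fin_three_of_ne hab hac hbc] at hrow
  suffices φ P h a = 0 ∨ φ P h c = 0 by
    rcases this with h0 | h0
    · right; linarith
    · left; linarith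
  rcases ((hB P hP).1 h b).eq_or_lt with hXb | hXb
  · -- `l` holds some `b`, and raising `h`'s rate above `l`'s changes nothing
    have hm := hl.mem_Ioo
    have ht : (m + 1) / 2 ∈ Set.Ioo 0 1 := ⟨by linarith [hm.1], by linarith [hm.2]⟩
    have hz := stdUtility_hasRate hab hac hbc ht
    have := hE.not_trade hB hab hac hbc (hP.update h (hz.noTies hab hac hbc)) hhl
      (by rwa [update_self]) (by rwa [update_of_ne hhl.symm]) (by linarith [hm.2])
    rw [map_update_eq_of_hasRate hB hE hSP hNB hC hab hac hbc hP hhl hh hl hz] at this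
    by_contra! hac0
    exact this ⟨((hB P hP).1 h a).lt_of_ne' hac0.1, ((hB P hP).1 h c).lt_of_ne' hac0.2,
      by linarith⟩
  · obtain ⟨x, hx⟩ := exists_apply_eq_zero_of_hasRate hB hE hSP hNB hC hab hac hbc hP hhl hh hl
    rcases fin_three_eq_or_eq_or_eq hab hac hbc x with rfl | rfl | rfl
    · exact .inl hx
    · exact absurd hx hXb.ne'
    · exact .inr hx

end Rigidity

theorem stmt8_general (φ : (Fin 3 → Fin 3 → ℝ) → Fin 3 → Fin 3 → ℝ)
    (hB : BistochasticValued φ) (hE : Efficient φ) (hSP : StrategyProof φ)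
    (hNB : NonBossy φ) (hC : NCContinuous φ)
    (u : Fin 3 → Fin 3 → ℝ) (hu : NoTiesProfile u)
    (i j : Fin 3) (hij : i ≠ j) (hord : SameOrder (u i) (u j))
    (a b c : Fin 3) (hab : a ≠ b) (hac : a ≠ c) (hbc : b ≠ c)
    (h1 : u i a > u i b) (h2 : u i b > u i c)
    (ui' : Fin 3 → ℝ) (hsame : SameOrder ui' (u i))
    (hpos : φ u i b + φ u j b > 0) :
    φ (Function.update u i ui') = φ u ∧
    (φ u i a + φ u i b = 1 ∨ φ u i b + φ u i c = 1) ∧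
    (φ u j a + φ u j b = 1 ∨ φ u j b + φ u j c = 1) := by
  have hi := hasRate_mu (a := a) (b := b) (c := c) h1 h2
  have hj := hasRate_mu (a := a) (b := b) (c := c) ((hord a b).1 h1) ((hord b c).1 h2)
  have hi' := hasRate_mu (a := a) (b := b) (c := c) ((hsame a b).2 h1) ((hsame b c).2 h2)
  exact ⟨map_update_eq_of_hasRate hB hE hSP hNB hC hab hac hbc hu hij hi hj hi',
    apply_add_apply_eq_one_or hB hE hSP hNB hC hab hac hbc hu hij hi hj hpos,
    apply_add_apply_eq_one_or hB hE hSP hNB hC hab hac hbc hu hij.symm hj hi (by linarith)⟩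

theorem stmt8 (φ : (Fin 3 → Fin 3 → ℝ) → Fin 3 → Fin 3 → ℝ)
    (hB : BistochasticValued φ) (hE : Efficient φ) (hSP : StrategyProof φ)
    (hNB : NonBossy φ) (hC : NCContinuous φ)
    (u : Fin 3 → Fin 3 → ℝ) (hu : NoTiesProfile u)
    (i j : Fin 3) (hij : i ≠ j) (hord : SameOrder (u i) (u j))
    (a b c : Fin 3) (hab : a ≠ b) (hac : a ≠ c) (hbc : b ≠ c)
    (h1 : u i a > u i b) (h2 : u i b > u i c)
    (ui' : Fin 3 → ℝ) (hui' : NoTies ui') (hsame : SameOrder ui' (u i))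
    (hpos : φ u i b + φ u j b > 0) :
    φ (Function.update u i ui') = φ u ∧
    (φ u i a + φ u i b = 1 ∨ φ u i b + φ u i c = 1) ∧
    (φ u j a + φ u j b = 1 ∨ φ u j b + φ u j c = 1) :=
  stmt8_general φ hB hE hSP hNB hC u hu i j hij hord a b c hab hac hbc h1 h2 ui' hsame hpos
end
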